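/- Let 𝒜 be an admissible Banach A-valued function algebra on X with 𝔄 = 𝒜 ∩ C(X). A maximal ideal ℳ of 𝒜 is of the form {f ∈ 𝒜 : φ∘f ∈ 𝖬} for some character φ of A and maximal ideal 𝖬 of 𝔄 if and only if φ[ℳ] = {φ∘f : f ∈ ℳ} ≠ 𝔄 for some φ ∈ Δ(A). -/
import Mathlib

set_option maxHeartbeats 1000000
set_option synthInstance.maxHeartbeats 400000


open WeakDual

variable {X : Type*} [TopologicalSpace X] [CompactSpace X] [T2Space X] [Nonempty X]
variable {A : Type*} [NormedCommRing A] [NormedAlgebra ℂ A] [CompleteSpace A] [Nontrivial A]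
variable {B : Type*} [NormedCommRing B] [NormedAlgebra ℂ B] [CompleteSpace B]

/-- The embedding of scalar-valued continuous functions into `A`-valued ones,
`g ↦ g·𝟏`. -/
noncomputable def scalHom (X A : Type*) [TopologicalSpace X] [NormedCommRing A]
    [NormedAlgebra ℂ A] : C(X, ℂ) →ₐ[ℂ] C(X, A) :=
  AlgHom.compLeftContinuous ℂ (Algebra.ofId ℂ A) (continuous_algebraMap ℂ A)

/-- The scalar subalgebra `𝔄 = 𝒜 ∩ C(X)`, realized inside `C(X, ℂ)`: those scalar
functions `g` with `g·𝟏 ∈ 𝒜`. -/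
noncomputable def scalarSub (ι : B →ₐ[ℂ] C(X, A)) : Subalgebra ℂ C(X, ℂ) :=
  Subalgebra.comap (scalHom X A) (AlgHom.range ι)

/-- Post-composition with a character `φ` of `A`, as an algebra hom `C(X,A) →ₐ C(X,ℂ)`. -/
noncomputable def postComp (X : Type*) [TopologicalSpace X] {A : Type*} [NormedCommRing A]
    [NormedAlgebra ℂ A] [CompleteSpace A] (φ : A →ₐ[ℂ] ℂ) : C(X, A) →ₐ[ℂ] C(X, ℂ) :=
  AlgHom.compLeftContinuous ℂ φ (map_continuous φ)

/-- The map `f ↦ φ ∘ ι f`, corestricted to the scalar subalgebra (using admissibility). -/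
noncomputable def phiAlg (ι : B →ₐ[ℂ] C(X, A)) (φ : A →ₐ[ℂ] ℂ)
    (hadm : ∀ (f : B) (φ : A →ₐ[ℂ] ℂ), ∃ g : B, ∀ x : X, ι g x = algebraMap ℂ A (φ (ι f x))) :
    B →ₐ[ℂ] ↥(scalarSub ι) :=
  AlgHom.codRestrict ((postComp X φ).comp ι) (scalarSub ι) (by
    intro f
    obtain ⟨g, hg⟩ := hadm f φ
    show scalHom X A _ ∈ ι.range
    exact ⟨g, ContinuousMap.ext fun x => hg x⟩)

theorem phiAlg_apply (ι : B →ₐ[ℂ] C(X, A)) (φ : A →ₐ[ℂ] ℂ)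
    (hadm : ∀ (f : B) (φ : A →ₐ[ℂ] ℂ), ∃ g : B, ∀ x : X, ι g x = algebraMap ℂ A (φ (ι f x)))
    (f : B) (x : X) : ((phiAlg ι φ hadm f : C(X, ℂ)) : C(X, ℂ)) x = φ (ι f x) := rfl

/-- A maximal ideal ℳ of 𝒜 is of the form {f : φ∘f ∈ N} for some φ ∈ Δ(A) and some
maximal ideal N of 𝔄 iff φ[ℳ] ≠ 𝔄 for some φ ∈ Δ(A). -/
theorem stmt11
(ι : B →ₐ[ℂ] C(X, A)) (hinj : Function.Injective ι)
    (κ : A →ₐ[ℂ] B) (hκ : ∀ a : A, ι (κ a) = ContinuousMap.const X a)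
    (hκnorm : ∃ c₁ > (0:ℝ), ∃ c₂ > (0:ℝ), ∀ a : A, c₁ * ‖a‖ ≤ ‖κ a‖ ∧ ‖κ a‖ ≤ c₂ * ‖a‖)
    (hdom : ∀ f : B, ‖ι f‖ ≤ ‖f‖)
    (hsep : ∀ x y : X, x ≠ y → ∀ M : Ideal A, M.IsMaximal → ∃ f : B, ι f x - ι f y ∉ M)
    (hss : Ideal.jacobson (⊥ : Ideal A) = ⊥)
    (hadm : ∀ (f : B) (φ : A →ₐ[ℂ] ℂ), ∃ g : B, ∀ x : X, ι g x = algebraMap ℂ A (φ (ι f x)))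
    (ℳ : Ideal B) (hℳ : ℳ.IsMaximal) :
    (∃ (φ : A →ₐ[ℂ] ℂ) (N : Ideal ↥(scalarSub ι)), N.IsMaximal ∧
        ∀ f : B, f ∈ ℳ ↔ ∃ g₀ : ↥(scalarSub ι), g₀ ∈ N ∧
          ∀ x : X, (g₀ : C(X, ℂ)) x = φ (ι f x)) ↔
      (∃ φ : A →ₐ[ℂ] ℂ, ¬ ∀ g₀ : ↥(scalarSub ι), ∃ f ∈ ℳ,
        ∀ x : X, (g₀ : C(X, ℂ)) x = φ (ι f x)) := by
  constructor
  · rintro ⟨φ, N, hN, hchar⟩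
    refine ⟨φ, fun hall => ?_⟩
    -- take g₀ = 1; get f ∈ ℳ with φ∘ιf = 1, then 1 ∈ N, contradiction
    obtain ⟨f, hfℳ, hf1⟩ := hall 1
    obtain ⟨g₀, hg₀N, hg₀⟩ := (hchar f).mp hfℳ
    have : g₀ = 1 := by
      ext x
      rw [hg₀ x, ← hf1 x]
    exact hN.ne_top (Ideal.eq_top_iff_one N |>.mpr (this ▸ hg₀N))
  · rintro ⟨φ, hne⟩
    set Φ := phiAlg ι φ hadm with hΦ
    -- key: membership statement is equivalent to Φ f ∈ N / g₀ = Φ f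
    have hkey : ∀ (g₀ : ↥(scalarSub ι)) (f : B),
        (∀ x : X, (g₀ : C(X, ℂ)) x = φ (ι f x)) ↔ g₀ = Φ f := by
      intro g₀ f
      constructor
      · intro h
        apply Subtype.ext
        ext x
        exact h x
      · intro h x
        rw [h]
        rfl
    -- the image ideal
    have hsurjv : ∀ y : ↥(scalarSub ι), ∃ f : B, Φ f = y := by
      intro y
      obtain ⟨g, hg⟩ := y.2
      refine ⟨g, Subtype.ext (ContinuousMap.ext fun x => ?_)⟩
      have h2 : algebraMap ℂ A ((y : C(X, ℂ)) x) = ι g x :=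
        (ContinuousMap.congr_fun hg x).symm
      calc (Φ g : C(X, ℂ)) x = φ (ι g x) := rfl
        _ = φ (algebraMap ℂ A ((y : C(X, ℂ)) x)) := by rw [h2]
        _ = (y : C(X, ℂ)) x := φ.commutes _
    have hsurj : Function.Surjective Φ := fun y => hsurjv y
    set I : Ideal ↥(scalarSub ι) := Ideal.map Φ ℳ with hI
    have hmemI : ∀ y, y ∈ I ↔ ∃ f ∈ ℳ, Φ f = y := fun y =>
      Ideal.mem_map_iff_of_surjective Φ.toRingHom hsurj
    have hInetop : I ≠ ⊤ := by
      intro htop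
      apply hne
      intro g₀
      have : g₀ ∈ I := htop ▸ Submodule.mem_top
      obtain ⟨f, hfℳ, hf⟩ := (hmemI g₀).mp this
      exact ⟨f, hfℳ, (hkey g₀ f).mpr hf.symm⟩
    obtain ⟨N, hNmax, hIN⟩ := Ideal.exists_le_maximal I hInetop
    refine ⟨φ, N, hNmax, fun f => ?_⟩
    constructor
    · intro hf
      exact ⟨Φ f, hIN ((hmemI (Φ f)).mpr ⟨f, hf, rfl⟩), (hkey (Φ f) f).mpr rfl⟩
    · rintro ⟨g₀, hg₀N, hg₀⟩
      have hΦfN : Φ f ∈ N := (hkey g₀ f).mp hg₀ ▸ hg₀N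
      -- comap N is a proper ideal containing ℳ, hence = ℳ
      have hle : ℳ ≤ Ideal.comap Φ.toRingHom N := by
        intro a ha
        exact hIN ((hmemI (Φ a)).mpr ⟨a, ha, rfl⟩)
      have hne' : Ideal.comap Φ.toRingHom N ≠ ⊤ := by
        intro htop
        apply hNmax.ne_top
        rw [Ideal.eq_top_iff_one]
        have h1 : (1 : B) ∈ Ideal.comap Φ.toRingHom N := htop ▸ Submodule.mem_top
        have h2 : Φ.toRingHom 1 ∈ N := h1
        rwa [map_one] at h2
      have : ℳ = Ideal.comap Φ.toRingHom N := hℳ.eq_of_le hne' hle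
      rw [this]
      exact hΦfN
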